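/- Let p be a prime with 4 dividing p−1, let λ be an element of order 4 in (ℤ/pℤ)ˣ (so −λ is the other element of order 4), and let k ∈ ℤ/pℤ with k ≠ 2⁻¹(1+λ). For s ∈ ℤ/pℤ define R̄_{4,s} = {a, b, a^{−λ} b^{−λ−1} c^s, a^{λ−1} b^λ c^{1−s}} (i.e., R_{4,s} with λ replaced by −λ) and S̄_{4,s} = R̄_{4,s} ∪ R̄_{4,s}⁻¹. Then the assignment a ↦ a, b ↦ a^{λ−1} b^λ c^{1−k+λ}, c ↦ c^λ extends to an automorphism φ of G_2(p) with φ(R_{4,k}) = R̄_{4,k−λ}; hence φ(S_{4,k}) = S̄_{4,k−λ}, the graphs Cay(G_2(p), S_{4,k}) and Cay(G_2(p), S̄_{4,k−λ}) are isomorphic, and k − λ ≠ 2⁻¹(1−λ). In particular the family of graphs Γ_{4,k} is independent of the choice of the element λ of order 4. -/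

import Mathlib

/-- The Cayley graph of a group `G` with respect to a subset `S`:
vertices are the elements of `G`, and `x`, `y` are adjacent iff `y * x⁻¹ ∈ S`
(symmetrized; when `S = S⁻¹` and `1 ∉ S` this is the usual Cayley graph). -/
def Cay (G : Type*) [Group G] (S : Set G) : SimpleGraph G where
  Adj x y := x ≠ y ∧ (y * x⁻¹ ∈ S ∨ x * y⁻¹ ∈ S)
  symm := ⟨fun x y h => ⟨h.1.symm, h.2.symm⟩⟩
  loopless := ⟨fun x h => h.1 rfl⟩

namespace SimpleGraph
variable {V : Type*} (Γ : SimpleGraph V)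

/-- The automorphism group acts transitively on vertices. -/
def VertexTransitive : Prop := ∀ u v : V, ∃ f : Γ ≃g Γ, f u = v

/-- The automorphism group acts transitively on (undirected) edges. -/
def EdgeTransitive : Prop :=
  ∀ e₁ ∈ Γ.edgeSet, ∀ e₂ ∈ Γ.edgeSet, ∃ f : Γ ≃g Γ, Sym2.map f e₁ = e₂

/-- The automorphism group acts transitively on arcs (ordered pairs of adjacent vertices). -/
def ArcTransitive : Prop :=
  ∀ u v x y : V, Γ.Adj u v → Γ.Adj x y → ∃ f : Γ ≃g Γ, f u = x ∧ f v = y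

/-- A graph is half-arc-transitive if it is vertex- and edge- but not arc-transitive. -/
def HalfArcTransitive : Prop :=
  Γ.VertexTransitive ∧ Γ.EdgeTransitive ∧ ¬ Γ.ArcTransitive

end SimpleGraph

/-- The right regular representation `Ĝ = {x ↦ x * g | g ∈ G}` as a subgroup of the
automorphism group of the Cayley graph `Cay G S`. -/
def rightRegular (G : Type*) [Group G] (S : Set G) :
    Subgroup ((Cay G S) ≃g (Cay G S)) where
  carrier := {f | ∃ g : G, ∀ x, f x = x * g}
  one_mem' := ⟨1, fun x => (mul_one x).symm⟩
  mul_mem' := by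
    rintro f f' ⟨g, hg⟩ ⟨g', hg'⟩
    exact ⟨g' * g, fun x => by
      show f (f' x) = x * (g' * g)
      rw [hg', hg, mul_assoc]⟩
  inv_mem' := by
    rintro f ⟨g, hg⟩
    refine ⟨g⁻¹, fun x => ?_⟩
    show f.symm x = x * g⁻¹
    have h1 : f (x * g⁻¹) = x := by rw [hg, inv_mul_cancel_right]
    have h2 : f.symm (f (x * g⁻¹)) = x * g⁻¹ := RelIso.symm_apply_apply f _
    rw [h1] at h2
    exact h2

/-- A Cayley graph is *normal* if the right regular representation is a normal subgroup
of its full automorphism group. -/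
def CayleyNormal (G : Type*) [Group G] (S : Set G) : Prop :=
  (rightRegular G S).Normal

/-- `Aut(G, S)`: the group of automorphisms of `G` preserving the subset `S` setwise. -/
def autStab (G : Type*) [Group G] (S : Set G) : Subgroup (MulAut G) where
  carrier := {α | α '' S = S}
  one_mem' := by simp
  mul_mem' := by
    intro α β hα hβ
    show (α * β) '' S = S
    have : ⇑(α * β) = ⇑α ∘ ⇑β := rfl
    rw [this, Set.image_comp, hβ, hα]
  inv_mem' := by
    intro α hα
    show ⇑α⁻¹ '' S = S
    conv_lhs => rw [← hα]
    rw [← Set.image_comp]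
    have : ⇑α⁻¹ ∘ ⇑α = id := by
      funext x
      exact α.symm_apply_apply x
    rw [this, Set.image_id]

/-- The setoid on an index set identifying indices with isomorphic graphs. -/
def graphIsoSetoid {ι V : Type*} (F : ι → SimpleGraph V) : Setoid ι where
  r k l := Nonempty (F k ≃g F l)
  iseqv := ⟨fun _ => ⟨RelIso.refl _⟩, fun ⟨f⟩ => ⟨f.symm⟩, fun ⟨f⟩ ⟨g⟩ => ⟨f.trans g⟩⟩
/-- Relations for the group `G₁(p) = ⟨a, b | a^(p²) = 1, b^p = 1, b⁻¹ a b = a^(1+p)⟩`. -/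
def G1Rels (p : ℕ) : Set (FreeGroup (Fin 2)) :=
  {FreeGroup.of 0 ^ (p ^ 2), FreeGroup.of 1 ^ p,
    (FreeGroup.of 1)⁻¹ * FreeGroup.of 0 * FreeGroup.of 1 * (FreeGroup.of 0 ^ (1 + p))⁻¹}

/-- The nonabelian metacyclic group of order `p³`. -/
abbrev G1 (p : ℕ) : Type := PresentedGroup (G1Rels p)

/-- The generator `a` of `G₁(p)`. -/
def a1 (p : ℕ) : G1 p := PresentedGroup.of 0

/-- The generator `b` of `G₁(p)`. -/
def b1 (p : ℕ) : G1 p := PresentedGroup.of 1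

/-- The connection set `T^{j,k} = {b^k a^(e^i), (b^k a^(e^i))⁻¹ : 0 ≤ i ≤ j-1} ⊆ G₁(p)`,
where `e` is a unit of `ℤ/p²ℤ` (of order `j`). -/
def Tset (p : ℕ) (e : (ZMod (p ^ 2))ˣ) (j k : ℕ) : Set (G1 p) :=
  ((fun i : ℕ => b1 p ^ k * a1 p ^ ((e ^ i : (ZMod (p ^ 2))ˣ) : ZMod (p ^ 2)).val) ''
      Set.Iio j) ∪
  ((fun i : ℕ => b1 p ^ k * a1 p ^ ((e ^ i : (ZMod (p ^ 2))ˣ) : ZMod (p ^ 2)).val) ''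
      Set.Iio j)⁻¹

open scoped commutatorElement

/-- Relations for the Heisenberg group
`G₂(p) = ⟨a, b, c | a^p = b^p = c^p = 1, [a,b] = c, [a,c] = [b,c] = 1⟩`. -/
def G2Rels (p : ℕ) : Set (FreeGroup (Fin 3)) :=
  {FreeGroup.of 0 ^ p, FreeGroup.of 1 ^ p, FreeGroup.of 2 ^ p,
    ⁅FreeGroup.of (0 : Fin 3), FreeGroup.of 1⁆ * (FreeGroup.of 2)⁻¹,
    ⁅FreeGroup.of (0 : Fin 3), FreeGroup.of 2⁆, ⁅FreeGroup.of (1 : Fin 3), FreeGroup.of 2⁆}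

/-- The nonabelian group of order `p³` and exponent `p`. -/
abbrev G2 (p : ℕ) : Type := PresentedGroup (G2Rels p)

/-- The generator `a` of `G₂(p)`. -/
def a2 (p : ℕ) : G2 p := PresentedGroup.of 0

/-- The generator `b` of `G₂(p)`. -/
def b2 (p : ℕ) : G2 p := PresentedGroup.of 1

/-- The generator `c = [a,b]` of `G₂(p)`. -/
def c2 (p : ℕ) : G2 p := PresentedGroup.of 2

/-- Power of an element of `G₂(p)` by an exponent in `ℤ/pℤ` (well defined as every
element of `G₂(p)` has order dividing `p`). -/
def pw {p : ℕ} (x : G2 p) (n : ZMod p) : G2 p := x ^ n.val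

/-- `R_{4,k} = {a, b, a^λ b^(λ-1) c^k, a^(-λ-1) b^(-λ) c^(1-k)} ⊆ G₂(p)`. -/
def R4 (p : ℕ) (lam k : ZMod p) : Set (G2 p) :=
  {a2 p, b2 p,
    pw (a2 p) lam * pw (b2 p) (lam - 1) * pw (c2 p) k,
    pw (a2 p) (-lam - 1) * pw (b2 p) (-lam) * pw (c2 p) (1 - k)}

/-- `S_{4,k} = R_{4,k} ∪ R_{4,k}⁻¹ ⊆ G₂(p)`. -/
def S4 (p : ℕ) (lam k : ZMod p) : Set (G2 p) :=
  R4 p lam k ∪ (R4 p lam k)⁻¹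

/-!
Write `abc i j l` for `a^i b^j c^l`. Since `c` is central and `b^j a^i = a^i b^j c^(-ij)`, these
elements multiply like the Heisenberg group over `ℤ/pℤ`:
`(i, j, l)(i', j', l') = (i + i', j + j', l + l' - j i')`, and the `n`-th power of `(i, j, l)` is
`(n i, n j, n l - i j n(n-1)/2)`. For odd `p` every normal form therefore has order dividing `p`,
so any two normal forms `x`, `y` together with `⁅x, y⁆ = (0, 0, ·)` satisfy the defining relations
of `G₂(p)`; this gives the endomorphism `φ`. When `λ² = -1`, the endomorphism built in the same way
from `(-λ, k - λ)` is inverse to `φ`, and a computation on normal forms shows that `φ` fixes `a`,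
sends `b` and the third element of `R_{4,k}` to the fourth and third elements of `R̄_{4,k-λ}`, and
sends the fourth element of `R_{4,k}` to `b`.
-/

def Cay.isoOfMulEquiv {G H : Type*} [Group G] [Group H] (φ : G ≃* H) {S : Set G} {T : Set H}
    (h : ⇑φ '' S = T) : Cay G S ≃g Cay H T where
  toEquiv := φ.toEquiv
  map_rel_iff' {x y} := by
    change (φ x ≠ φ y ∧ (φ y * (φ x)⁻¹ ∈ T ∨ φ x * (φ y)⁻¹ ∈ T)) ↔
      (x ≠ y ∧ (y * x⁻¹ ∈ S ∨ x * y⁻¹ ∈ S))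
    rw [← h, ← map_inv, ← map_mul, ← map_inv, ← map_mul, φ.injective.mem_set_image,
      φ.injective.mem_set_image, φ.injective.ne_iff]

theorem Units.val_sq_eq_neg_one_of_orderOf_eq_four {R : Type*} [Ring R] [NoZeroDivisors R]
    {u : Rˣ} (hu : orderOf u = 4) : (u : R) ^ 2 = -1 := by
  have hu2 : u ^ 2 ≠ 1 := pow_ne_one_of_lt_orderOf two_ne_zero (by omega)
  have hu4 : ((u : R) ^ 2) ^ 2 = 1 := by
    rw [← pow_mul, ← Units.val_pow_eq_pow_val, show 2 * 2 = orderOf u by omega,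
      pow_orderOf_eq_one, Units.val_one]
  exact (sq_eq_one_iff.mp hu4).resolve_left fun h => hu2 (Units.ext (by simpa using h))

theorem Units.two_ne_zero_of_orderOf_eq_four {R : Type*} [Ring R] [NoZeroDivisors R]
    {u : Rˣ} (hu : orderOf u = 4) : (2 : R) ≠ 0 := by
  have hu2 : u ^ 2 ≠ 1 := pow_ne_one_of_lt_orderOf two_ne_zero (by omega)
  intro h2
  apply hu2
  apply Units.ext
  rw [Units.val_pow_eq_pow_val, Units.val_sq_eq_neg_one_of_orderOf_eq_four hu, Units.val_one,
    neg_eq_iff_add_eq_zero, one_add_one_eq_two, h2]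

namespace G2

variable {p : ℕ}

theorem a2_pow_self : a2 p ^ p = 1 := by
  rw [a2, PresentedGroup.of, ← map_pow]
  exact PresentedGroup.one_of_mem (by simp [G2Rels])

theorem b2_pow_self : b2 p ^ p = 1 := by
  rw [b2, PresentedGroup.of, ← map_pow]
  exact PresentedGroup.one_of_mem (by simp [G2Rels])

theorem c2_pow_self : c2 p ^ p = 1 := by
  rw [c2, PresentedGroup.of, ← map_pow]
  exact PresentedGroup.one_of_mem (by simp [G2Rels])

theorem commutatorElement_a2_b2 : ⁅a2 p, b2 p⁆ = c2 p := by
  have h := PresentedGroup.one_of_mem (rels := G2Rels p)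
    (x := ⁅FreeGroup.of (0 : Fin 3), FreeGroup.of 1⁆ * (FreeGroup.of 2)⁻¹) (by simp [G2Rels])
  rw [map_mul, map_inv, map_commutatorElement] at h
  exact mul_inv_eq_one.mp h

theorem commute_a2_c2 : Commute (a2 p) (c2 p) := by
  have h := PresentedGroup.one_of_mem (rels := G2Rels p)
    (x := ⁅FreeGroup.of (0 : Fin 3), FreeGroup.of 2⁆) (by simp [G2Rels])
  rw [map_commutatorElement] at h
  exact commutatorElement_eq_one_iff_commute.mp h

theorem commute_b2_c2 : Commute (b2 p) (c2 p) := by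
  have h := PresentedGroup.one_of_mem (rels := G2Rels p)
    (x := ⁅FreeGroup.of (1 : Fin 3), FreeGroup.of 2⁆) (by simp [G2Rels])
  rw [map_commutatorElement] at h
  exact commutatorElement_eq_one_iff_commute.mp h

theorem commute_c2 (x : G2 p) : Commute (c2 p) x := by
  have hx : x ∈ Subgroup.centralizer {c2 p} := by
    refine PresentedGroup.generated_by _ _ (fun i => ?_) x
    rw [Subgroup.mem_centralizer_singleton_iff]
    fin_cases i
    exacts [commute_a2_c2.eq, commute_b2_c2.eq, rfl]
  exact (Subgroup.mem_centralizer_singleton_iff.mp hx).symm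

theorem a2_mul_b2_pow (N : ℕ) : a2 p * b2 p ^ N = c2 p ^ N * b2 p ^ N * a2 p := by
  have h : a2 p * b2 p * (a2 p)⁻¹ = c2 p * b2 p := by
    rw [← commutatorElement_a2_b2, commutatorElement_def]; group
  rw [← (commute_c2 _).mul_pow, ← h, conj_pow]; group

theorem a2_pow_mul_b2_pow (M N : ℕ) :
    a2 p ^ M * b2 p ^ N = c2 p ^ (M * N) * b2 p ^ N * a2 p ^ M := by
  induction M with
  | zero => simp
  | succ M ih =>
    calc a2 p ^ (M + 1) * b2 p ^ N = a2 p ^ M * (c2 p ^ N * b2 p ^ N * a2 p) := by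
          rw [pow_succ, mul_assoc, a2_mul_b2_pow]
      _ = c2 p ^ N * (a2 p ^ M * b2 p ^ N) * a2 p := by
          simp only [mul_assoc, ((commute_c2 _).pow_left N).left_comm]
      _ = c2 p ^ ((M + 1) * N) * b2 p ^ N * a2 p ^ (M + 1) := by
          rw [ih, add_mul, one_mul, pow_add, pow_succ]; group

theorem map_pw (f : G2 p →* G2 p) (x : G2 p) (n : ZMod p) : f (pw x n) = pw (f x) n :=
  map_pow f x n.val

section

variable {G : Type*} [Group G] {x y z : G}

def lift (hx : x ^ p = 1) (hy : y ^ p = 1) (hz : z ^ p = 1) (hxy : ⁅x, y⁆ = z)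
    (hxz : Commute x z) (hyz : Commute y z) : G2 p →* G :=
  PresentedGroup.toGroup (f := ![x, y, z]) <| by
    intro r hr
    simp only [G2Rels, Set.mem_insert_iff, Set.mem_singleton_iff] at hr
    rcases hr with rfl | rfl | rfl | rfl | rfl | rfl <;>
      simp [map_commutatorElement, hx, hy, hz, hxy,
        commutatorElement_eq_one_iff_commute.mpr, hxz, hyz]

variable (hx : x ^ p = 1) (hy : y ^ p = 1) (hz : z ^ p = 1) (hxy : ⁅x, y⁆ = z)
    (hxz : Commute x z) (hyz : Commute y z)

theorem lift_a2 : lift hx hy hz hxy hxz hyz (a2 p) = x := PresentedGroup.toGroup.of _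
theorem lift_b2 : lift hx hy hz hxy hxz hyz (b2 p) = y := PresentedGroup.toGroup.of _
theorem lift_c2 : lift hx hy hz hxy hxz hyz (c2 p) = z := PresentedGroup.toGroup.of _

end

theorem pw_zero (x : G2 p) : pw x 0 = 1 := by
  rw [pw, ZMod.val_zero, pow_zero]

theorem commute_pw_c2 (m : ZMod p) (x : G2 p) : Commute (pw (c2 p) m) x :=
  (commute_c2 x).pow_left _

def abc (i j l : ZMod p) : G2 p := pw (a2 p) i * pw (b2 p) j * pw (c2 p) l

theorem abc_zero : abc (0 : ZMod p) 0 0 = 1 := by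
  simp only [abc, pw_zero, mul_one]

theorem abc_zero_zero (l : ZMod p) : abc 0 0 l = pw (c2 p) l := by
  simp only [abc, pw_zero, one_mul]

theorem commute_abc_abc_zero_zero (i j l m : ZMod p) : Commute (abc i j l) (abc 0 0 m) := by
  rw [abc_zero_zero]
  exact (commute_pw_c2 m _).symm

theorem abc_one_zero_zero [Fact (1 < p)] : abc (1 : ZMod p) 0 0 = a2 p := by
  simp only [abc, pw, ZMod.val_one, ZMod.val_zero, pow_zero, pow_one, mul_one]

theorem abc_zero_one_zero [Fact (1 < p)] : abc (0 : ZMod p) 1 0 = b2 p := by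
  simp only [abc, pw, ZMod.val_one, ZMod.val_zero, pow_zero, pow_one, mul_one, one_mul]

theorem abc_zero_zero_one [Fact (1 < p)] : abc (0 : ZMod p) 0 1 = c2 p := by
  simp only [abc, pw, ZMod.val_one, ZMod.val_zero, pow_zero, pow_one, one_mul]

theorem R4_eq_abc (lam k : ZMod p) :
    R4 p lam k = {a2 p, b2 p, abc lam (lam - 1) k, abc (-lam - 1) (-lam) (1 - k)} :=
  rfl

section

variable [NeZero p]

theorem pw_add {x : G2 p} (hx : x ^ p = 1) (m n : ZMod p) : pw x (m + n) = pw x m * pw x n := by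
  rw [pw, ZMod.val_add, ← pow_eq_pow_mod _ hx, pow_add, pw, pw]

theorem pw_b2_mul_pw_a2 (i j : ZMod p) :
    pw (b2 p) j * pw (a2 p) i = pw (a2 p) i * pw (b2 p) j * pw (c2 p) (-(i * j)) := by
  have h : pw (a2 p) i * pw (b2 p) j = pw (c2 p) (i * j) * pw (b2 p) j * pw (a2 p) i := by
    rw [pw, pw, pw, ZMod.val_mul, ← pow_eq_pow_mod _ c2_pow_self, a2_pow_mul_b2_pow]
  calc pw (b2 p) j * pw (a2 p) i
      = pw (b2 p) j * pw (a2 p) i * pw (c2 p) (i * j + -(i * j)) := by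
        rw [add_neg_cancel, pw_zero, mul_one]
    _ = pw (c2 p) (i * j) * (pw (b2 p) j * pw (a2 p) i) * pw (c2 p) (-(i * j)) := by
        rw [pw_add c2_pow_self, ← mul_assoc, (commute_pw_c2 _ _).eq]
    _ = _ := by rw [h, mul_assoc (pw (c2 p) _) (pw (b2 p) j)]

theorem abc_mul_abc (i j l i' j' l' : ZMod p) :
    abc i j l * abc i' j' l' = abc (i + i') (j + j') (l + l' - j * i') := by
  calc abc i j l * abc i' j' l'
      = pw (a2 p) i * (pw (b2 p) j * pw (a2 p) i') * pw (b2 p) j' *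
          (pw (c2 p) l * pw (c2 p) l') := by
        simp only [abc, mul_assoc, (commute_pw_c2 l _).left_comm]
    _ = pw (a2 p) i * pw (a2 p) i' * (pw (b2 p) j * pw (b2 p) j') *
          (pw (c2 p) (-(i' * j)) * (pw (c2 p) l * pw (c2 p) l')) := by
        simp only [pw_b2_mul_pw_a2, mul_assoc, (commute_pw_c2 _ (pw (b2 p) j')).left_comm]
    _ = abc (i + i') (j + j') (l + l' - j * i') := by
        simp only [abc, ← pw_add a2_pow_self, ← pw_add b2_pow_self, ← pw_add c2_pow_self]
        ring_nf

theorem abc_pow (i j l : ZMod p) (N : ℕ) :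
    abc i j l ^ N =
      abc ((N : ZMod p) * i) (N * j) (N * l - i * j * (N.choose 2 : ℕ)) := by
  induction N with
  | zero => simp [abc_zero]
  | succ N ih =>
    rw [pow_succ, ih, abc_mul_abc, Nat.choose_succ_succ, Nat.choose_one_right]
    congr 1 <;> push_cast <;> ring

theorem inv_abc (i j l : ZMod p) : (abc i j l)⁻¹ = abc (-i) (-j) (-l - j * i) := by
  refine inv_eq_of_mul_eq_one_right ?_
  rw [abc_mul_abc, ← abc_zero]
  congr 1 <;> ring

theorem commutatorElement_abc (i j l i' j' l' : ZMod p) :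
    ⁅abc i j l, abc i' j' l'⁆ = abc 0 0 (i * j' - j * i') := by
  rw [commutatorElement_def, inv_abc, inv_abc, abc_mul_abc, abc_mul_abc, abc_mul_abc]
  congr 1 <;> ring

end

section

variable [Fact p.Prime] [NeZero (2 : ZMod p)]

theorem abc_pow_self (i j l : ZMod p) : abc i j l ^ p = 1 := by
  rw [abc_pow, Nat.cast_choose_two, ZMod.natCast_self, ← abc_zero]
  congr 1 <;> ring

theorem pw_abc (i j l n : ZMod p) :
    pw (abc i j l) n = abc (n * i) (n * j) (n * l - i * j * (n * (n - 1) / 2)) := by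
  rw [pw, abc_pow, Nat.cast_choose_two, ZMod.natCast_zmod_val]

def endo (i₀ j₀ l₀ i₁ j₁ l₁ : ZMod p) : G2 p →* G2 p :=
  lift (abc_pow_self i₀ j₀ l₀) (abc_pow_self i₁ j₁ l₁) (abc_pow_self 0 0 (i₀ * j₁ - j₀ * i₁))
    (commutatorElement_abc ..) (commute_abc_abc_zero_zero ..) (commute_abc_abc_zero_zero ..)

theorem endo_abc (i₀ j₀ l₀ i₁ j₁ l₁ i j l : ZMod p) :
    endo i₀ j₀ l₀ i₁ j₁ l₁ (abc i j l) =
      abc (i * i₀ + j * i₁) (i * j₀ + j * j₁)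
        (i * l₀ + j * l₁ + (i₀ * j₁ - j₀ * i₁) * l - i₀ * j₀ * (i * (i - 1) / 2)
          - i₁ * j₁ * (j * (j - 1) / 2) - i * j * j₀ * i₁) := by
  rw [abc, map_mul, map_mul, endo, map_pw, map_pw, map_pw, lift_a2, lift_b2, lift_c2,
    pw_abc, pw_abc, pw_abc, abc_mul_abc, abc_mul_abc]
  congr 1 <;> ring

def phi (lam k : ZMod p) : G2 p →* G2 p := endo 1 0 0 (lam - 1) lam (1 - k + lam)

theorem phi_abc (lam k i j l : ZMod p) :
    phi lam k (abc i j l) =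
      abc (i + j * (lam - 1)) (j * lam)
        (j * (1 - k + lam) + lam * l - (lam - 1) * lam * (j * (j - 1) / 2)) := by
  rw [phi, endo_abc]
  congr 1 <;> ring

theorem phi_a2 (lam k : ZMod p) : phi lam k (a2 p) = a2 p := by
  rw [← abc_one_zero_zero, phi_abc]
  congr 1 <;> ring

theorem phi_b2 (lam k : ZMod p) : phi lam k (b2 p) = abc (lam - 1) lam (1 - k + lam) := by
  rw [← abc_zero_one_zero, phi_abc]
  congr 1 <;> ring

theorem phi_c2 (lam k : ZMod p) : phi lam k (c2 p) = pw (c2 p) lam := by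
  rw [← abc_zero_zero, ← abc_zero_zero_one, phi_abc]
  congr 1 <;> ring

variable {lam : ZMod p} (k : ZMod p) (hlam : lam ^ 2 = -1)
include hlam

theorem phi_neg_comp_phi : (phi (-lam) (k - lam)).comp (phi lam k) = MonoidHom.id (G2 p) := by
  have h2 : (2 : ZMod p) ≠ 0 := two_ne_zero
  refine PresentedGroup.ext fun x => ?_
  fin_cases x
  · change phi (-lam) (k - lam) (phi lam k (a2 p)) = a2 p
    rw [phi_a2, phi_a2]
  · change phi (-lam) (k - lam) (phi lam k (b2 p)) = b2 p
    rw [phi_b2, phi_abc, ← abc_zero_one_zero]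
    congr 1 <;> grind
  · change phi (-lam) (k - lam) (phi lam k (c2 p)) = c2 p
    rw [← abc_zero_zero_one, phi_abc, phi_abc]
    congr 1 <;> grind

def phiEquiv : G2 p ≃* G2 p :=
  (phi lam k).toMulEquiv (phi (-lam) (k - lam)) (phi_neg_comp_phi k hlam) <| by
    simpa using phi_neg_comp_phi (lam := -lam) (k - lam) (by rwa [neg_sq])

theorem phiEquiv_apply (x : G2 p) : phiEquiv k hlam x = phi lam k x := rfl

theorem image_phiEquiv_R4 : ⇑(phiEquiv k hlam) '' R4 p lam k = R4 p (-lam) (k - lam) := by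
  have h2 : (2 : ZMod p) ≠ 0 := two_ne_zero
  have h3 : phi lam k (abc lam (lam - 1) k) = abc (-lam) (-lam - 1) (k - lam) := by
    rw [phi_abc]
    congr 1 <;> grind
  have h4 : phi lam k (abc (-lam - 1) (-lam) (1 - k)) = b2 p := by
    rw [phi_abc, ← abc_zero_one_zero]
    congr 1 <;> grind
  have hb : abc (-(-lam) - 1) (-(-lam)) (1 - (k - lam)) = abc (lam - 1) lam (1 - k + lam) := by
    congr 1 <;> ring
  rw [R4_eq_abc, R4_eq_abc, hb]
  simp only [Set.image_insert_eq, Set.image_singleton, phiEquiv_apply, phi_a2, phi_b2, h3, h4]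
  ext x
  simp only [Set.mem_insert_iff, Set.mem_singleton_iff]
  tauto

end

end G2

open G2 in
theorem statement13_general (p : ℕ) (hp : p.Prime)
    (lam : (ZMod p)ˣ) (hlam : orderOf lam = 4)
    (k : ZMod p) (hk : k ≠ (2 : ZMod p)⁻¹ * (1 + (lam : ZMod p))) :
    ∃ φ : MulAut (G2 p),
      φ (a2 p) = a2 p ∧
      φ (b2 p) = pw (a2 p) ((lam : ZMod p) - 1) * pw (b2 p) (lam : ZMod p) *
        pw (c2 p) (1 - k + (lam : ZMod p)) ∧
      φ (c2 p) = pw (c2 p) (lam : ZMod p) ∧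
      ⇑φ '' R4 p (lam : ZMod p) k = R4 p (-(lam : ZMod p)) (k - (lam : ZMod p)) ∧
      ⇑φ '' S4 p (lam : ZMod p) k = S4 p (-(lam : ZMod p)) (k - (lam : ZMod p)) ∧
      Nonempty (Cay (G2 p) (S4 p (lam : ZMod p) k) ≃g
        Cay (G2 p) (S4 p (-(lam : ZMod p)) (k - (lam : ZMod p)))) ∧
      k - (lam : ZMod p) ≠ (2 : ZMod p)⁻¹ * (1 - (lam : ZMod p)) := by
  have : Fact p.Prime := ⟨hp⟩
  have : NeZero (2 : ZMod p) := ⟨Units.two_ne_zero_of_orderOf_eq_four hlam⟩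
  have hsq := Units.val_sq_eq_neg_one_of_orderOf_eq_four hlam
  have hR := image_phiEquiv_R4 k hsq
  have hS : ⇑(phiEquiv k hsq) '' S4 p lam k = S4 p (-lam) (k - lam) := by
    rw [S4, Set.image_union, Set.image_inv, hR, S4]
  refine ⟨phiEquiv k hsq, phi_a2 (lam : ZMod p) k, phi_b2 (lam : ZMod p) k,
    phi_c2 (lam : ZMod p) k, hR, hS,
    ⟨Cay.isoOfMulEquiv _ hS⟩, fun h => hk ?_⟩
  have h2 : (2 : ZMod p) ≠ 0 := two_ne_zero
  grind

/-- The assignment `a ↦ a`, `b ↦ a^(λ-1) b^λ c^(1-k+λ)`, `c ↦ c^λ`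
extends to an automorphism `φ` of `G₂(p)` mapping `R_{4,k}` onto `R̄_{4,k-λ}`
(which is `R_{4,k-λ}` defined with `-λ` in place of `λ`); hence `φ(S_{4,k}) = S̄_{4,k-λ}`,
`Cay(G₂(p), S_{4,k}) ≅ Cay(G₂(p), S̄_{4,k-λ})` and `k - λ ≠ 2⁻¹(1-λ)`: the family of
graphs `Γ_{4,k}` is independent of the choice of the element `λ` of order 4. -/
theorem statement13 (p : ℕ) (hp : p.Prime) (hdvd : 4 ∣ p - 1)
    (lam : (ZMod p)ˣ) (hlam : orderOf lam = 4)
    (k : ZMod p) (hk : k ≠ (2 : ZMod p)⁻¹ * (1 + (lam : ZMod p))) :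
    ∃ φ : MulAut (G2 p),
      φ (a2 p) = a2 p ∧
      φ (b2 p) = pw (a2 p) ((lam : ZMod p) - 1) * pw (b2 p) (lam : ZMod p) *
        pw (c2 p) (1 - k + (lam : ZMod p)) ∧
      φ (c2 p) = pw (c2 p) (lam : ZMod p) ∧
      ⇑φ '' R4 p (lam : ZMod p) k = R4 p (-(lam : ZMod p)) (k - (lam : ZMod p)) ∧
      ⇑φ '' S4 p (lam : ZMod p) k = S4 p (-(lam : ZMod p)) (k - (lam : ZMod p)) ∧
      Nonempty (Cay (G2 p) (S4 p (lam : ZMod p) k) ≃g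
        Cay (G2 p) (S4 p (-(lam : ZMod p)) (k - (lam : ZMod p)))) ∧
      k - (lam : ZMod p) ≠ (2 : ZMod p)⁻¹ * (1 - (lam : ZMod p)) :=
  statement13_general p hp lam hlam k hk
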